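/- Let F : H → H be monotone (in fact continuous, Lipschitz), g proper, convex, lsc, γ ∈ (0, 1/L), and suppose zer(F + ∂g) ≠ ∅. Then the extragradient sequence (zᵏ) converges weakly to a point in zer(F + ∂g). -/

import Mathlib

/-!
Every solution `p ∈ zer(F + ∂g)` is a Fejér point of the iteration: summing the subgradient
inequalities of `∂g` at `z̄ᵏ`, `zᵏ⁺¹` and `p`, and using monotonicity and `L`-Lipschitz continuity
of `F`, gives `‖zᵏ⁺¹ - p‖² ≤ ‖zᵏ - p‖² - (1 - γL)(‖zᵏ - z̄ᵏ‖² + ‖z̄ᵏ - zᵏ⁺¹‖²)`.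
Hence `(zᵏ)` is bounded, `‖zᵏ - p‖` converges for every solution `p`, and `zᵏ - z̄ᵏ → 0`.

Weak cluster points are taken as weak limits along ultrafilters, which exist by Riesz
representation, instead of along subsequences. Each of them is a solution: the vector
`γ⁻¹(zᵏ - z̄ᵏ) - (F zᵏ - F z̄ᵏ)` lies in `(F + ∂g)(z̄ᵏ)` and tends to `0` strongly, and the graph of
`F + ∂g` is closed under weak-strong limits (weak lower semicontinuity of `g` and Minty's trick).
Opial's argument then shows that there is only one weak cluster point.
-/

open scoped RealInnerProductSpace

/-- `g` is proper: finite somewhere and never `⊥`. -/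
def IsProperEF {H : Type*} (g : H → EReal) : Prop :=
  (∃ x, g x ≠ ⊤) ∧ ∀ x, g x ≠ ⊥

/-- `g` is convex (extended-real-valued). -/
def IsConvexEF {H : Type*} [NormedAddCommGroup H] [InnerProductSpace ℝ H]
    (g : H → EReal) : Prop :=
  ∀ x y : H, ∀ a b : ℝ, 0 ≤ a → 0 ≤ b → a + b = 1 →
    g (a • x + b • y) ≤ (a : EReal) * g x + (b : EReal) * g y

/-- `ξ` is a subgradient of `g` at `z`, i.e. `ξ ∈ ∂g(z)`. -/
def InSubdiff {H : Type*} [NormedAddCommGroup H] [InnerProductSpace ℝ H]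
    (g : H → EReal) (z ξ : H) : Prop :=
  ∀ y : H, g z + ((⟪ξ, y - z⟫ : ℝ) : EReal) ≤ g y

/-- `p = prox_{γ g}(x)`, i.e. `p` minimizes `g(·) + (1/(2γ))‖x - ·‖²`. -/
def IsProx {H : Type*} [NormedAddCommGroup H] [InnerProductSpace ℝ H]
    (g : H → EReal) (γ : ℝ) (x p : H) : Prop :=
  ∀ y : H, g p + ((1 / (2 * γ) * ‖x - p‖ ^ 2 : ℝ) : EReal) ≤
    g y + ((1 / (2 * γ) * ‖x - y‖ ^ 2 : ℝ) : EReal)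

/-- The Lyapunov function `V`. -/
noncomputable def lyapV {H : Type*} [NormedAddCommGroup H] [InnerProductSpace ℝ H]
    (F : H → H) (γ : ℝ) (z zb zp : H) : ℝ :=
  (2 / γ) * ⟪z - zp, F z - F zb⟫ + (1 / γ ^ 2) * ‖zp - zb‖ ^ 2 + (1 / γ ^ 2) * ‖z - zp‖ ^ 2

open Filter Topology Set Bornology

lemma EReal.toReal_add_le_toReal {a b : EReal} {c : ℝ} (ha : a ≠ ⊥) (ha' : a ≠ ⊤) (hb : b ≠ ⊤)
    (h : a + c ≤ b) : a.toReal + c ≤ b.toReal := by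
  lift a to ℝ using ⟨ha', ha⟩
  rw [← EReal.coe_add] at h
  lift b to ℝ using ⟨hb, ne_bot_of_le_ne_bot (EReal.coe_ne_bot _) h⟩
  exact_mod_cast h

lemma le_of_forall_mem_Ioc_le {f : ℝ → ℝ} {a : ℝ} (hf : ContinuousWithinAt f (Ioi 0) 0)
    (h : ∀ t ∈ Ioc (0 : ℝ) 1, a ≤ f t) : a ≤ f 0 :=
  ge_of_tendsto hf (eventually_of_mem (Ioc_mem_nhdsGT one_pos) h)

lemma tendsto_zero_of_succ_le_sub_mul {u d : ℕ → ℝ} {δ : ℝ} (hδ : 0 < δ) (hu : ∀ k, 0 ≤ u k)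
    (hd : ∀ k, 0 ≤ d k) (h : ∀ k, u (k + 1) ≤ u k - δ * d k) : Tendsto d atTop (𝓝 0) := by
  have hanti : Antitone u :=
    antitone_nat_of_succ_le fun k => (h k).trans (sub_le_self _ (mul_nonneg hδ.le (hd k)))
  have hu_lim := tendsto_atTop_ciInf hanti ⟨0, forall_mem_range.2 hu⟩
  have hgap : Tendsto (fun k => (u k - u (k + 1)) / δ) atTop (𝓝 0) := by
    simpa using (hu_lim.sub (hu_lim.comp (tendsto_add_atTop_nat 1))).div_const δ
  refine squeeze_zero hd (fun k => ?_) hgap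
  rw [le_div_iff₀ hδ]
  linarith [h k]

lemma ne_top_of_forall_add_le {H : Type*} {g : H → EReal} (hg : IsProperEF g) {p : H} {c : H → ℝ}
    (h : ∀ y, g p + c y ≤ g y) : g p ≠ ⊤ := by
  obtain ⟨⟨y, hy⟩, -⟩ := hg
  intro hp
  have := h y
  rw [hp, EReal.top_add_coe, top_le_iff] at this
  exact hy this

section NormedGroup

variable {H : Type*} [NormedAddCommGroup H]

lemma antitone_norm_sub_of_sq_succ_le {z : ℕ → H} {p : H}
    (h : ∀ k, ‖z (k + 1) - p‖ ^ 2 ≤ ‖z k - p‖ ^ 2) : Antitone fun k => ‖z k - p‖ :=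
  antitone_nat_of_succ_le fun k =>
    (pow_le_pow_iff_left₀ (norm_nonneg _) (norm_nonneg _) two_ne_zero).1 (h k)

lemma tendsto_sub_of_sq_succ_le_sub_mul {z w : ℕ → H} {p : H} {δ : ℝ} (hδ : 0 < δ)
    (h : ∀ k, ‖z (k + 1) - p‖ ^ 2 ≤ ‖z k - p‖ ^ 2 - δ * ‖z k - w k‖ ^ 2) :
    Tendsto (fun k => w k - z k) atTop (𝓝 0) := by
  have hsq := tendsto_zero_of_succ_le_sub_mul (u := fun k => ‖z k - p‖ ^ 2)
    (d := fun k => ‖z k - w k‖ ^ 2) hδ (fun k => by positivity) (fun k => by positivity) h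
  rw [tendsto_zero_iff_norm_tendsto_zero]
  simpa [norm_sub_rev, Real.sqrt_sq (norm_nonneg _)] using hsq.sqrt

lemma Bornology.IsBounded.range_of_tendsto_sub {x y : ℕ → H} (hx : IsBounded (range x))
    (h : Tendsto (fun k => y k - x k) atTop (𝓝 0)) : IsBounded (range y) := by
  obtain ⟨M, hM⟩ := isBounded_iff_forall_norm_le.1 hx
  obtain ⟨M', hM'⟩ := isBounded_iff_forall_norm_le.1 (Metric.isBounded_range_of_tendsto _ h)
  refine isBounded_iff_forall_norm_le.2 ⟨M + M', forall_mem_range.2 fun k => ?_⟩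
  calc ‖y k‖ = ‖x k + (y k - x k)‖ := by rw [add_sub_cancel]
    _ ≤ M + M' := (norm_add_le _ _).trans
        (add_le_add (hM _ (mem_range_self k)) (hM' _ (mem_range_self k)))

end NormedGroup

section Hilbert

variable {H : Type*} [NormedAddCommGroup H] [InnerProductSpace ℝ H] {g : H → EReal}

lemma InSubdiff.ne_top (hg : IsProperEF g) {p ξ : H} (h : InSubdiff g p ξ) : g p ≠ ⊤ :=
  ne_top_of_forall_add_le hg h

lemma InSubdiff.toReal_add_inner_le (hg : IsProperEF g) {p ξ y : H} (h : InSubdiff g p ξ)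
    (hy : g y ≠ ⊤) : (g p).toReal + ⟪ξ, y - p⟫ ≤ (g y).toReal :=
  EReal.toReal_add_le_toReal (hg.2 p) (h.ne_top hg) hy (h y)

lemma inSubdiff_of_toReal (hbot : ∀ x, g x ≠ ⊥) {p ξ : H} (hp : g p ≠ ⊤)
    (h : ∀ y, g y ≠ ⊤ → (g p).toReal + ⟪ξ, y - p⟫ ≤ (g y).toReal) : InSubdiff g p ξ := by
  intro y
  rcases eq_or_ne (g y) ⊤ with hy | hy
  · simp [hy]
  · rw [← EReal.coe_toReal hp (hbot p), ← EReal.coe_toReal hy (hbot y)]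
    exact_mod_cast h y hy

lemma InSubdiff.inner_add_inner_add_inner_nonpos (hg : IsProperEF g) {p₁ p₂ p₃ ξ₁ ξ₂ ξ₃ : H}
    (h₁ : InSubdiff g p₁ ξ₁) (h₂ : InSubdiff g p₂ ξ₂) (h₃ : InSubdiff g p₃ ξ₃) :
    ⟪ξ₁, p₂ - p₁⟫ + ⟪ξ₂, p₃ - p₂⟫ + ⟪ξ₃, p₁ - p₃⟫ ≤ 0 := by
  have := h₁.toReal_add_inner_le hg (h₂.ne_top hg)
  have := h₂.toReal_add_inner_le hg (h₃.ne_top hg)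
  have := h₃.toReal_add_inner_le hg (h₁.ne_top hg)
  linarith

lemma IsConvexEF.le_coe (hconv : IsConvexEF g) {x y : H} {r s a b : ℝ} (hx : g x ≤ r)
    (hy : g y ≤ s) (ha : 0 ≤ a) (hb : 0 ≤ b) (hab : a + b = 1) :
    g (a • x + b • y) ≤ ((a * r + b * s : ℝ) : EReal) := by
  refine (hconv x y a b ha hb hab).trans ?_
  push_cast
  exact add_le_add (mul_le_mul_of_nonneg_left hx (EReal.coe_nonneg.2 ha))
    (mul_le_mul_of_nonneg_left hy (EReal.coe_nonneg.2 hb))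

lemma IsConvexEF.convex_sublevel (hconv : IsConvexEF g) (s : ℝ) :
    Convex ℝ {x | g x ≤ s} := by
  intro x hx y hy a b ha hb hab
  simpa [← add_mul, hab] using hconv.le_coe hx hy ha hb hab

lemma IsProx.ne_top (hg : IsProperEF g) {γ : ℝ} {x p : H} (h : IsProx g γ x p) : g p ≠ ⊤ := by
  obtain ⟨⟨y, hy⟩, hbot⟩ := hg
  intro hp
  have := h y
  rw [hp, EReal.top_add_coe, top_le_iff, ← EReal.coe_toReal hy (hbot y), ← EReal.coe_add] at this
  exact EReal.coe_ne_top _ this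

lemma IsProx.inSubdiff (hg : IsProperEF g) (hconv : IsConvexEF g) {γ : ℝ} {x p : H}
    (h : IsProx g γ x p) : InSubdiff g p (γ⁻¹ • (x - p)) := by
  have hp := h.ne_top hg
  refine inSubdiff_of_toReal hg.2 hp fun y hy => ?_
  have key : ∀ t ∈ Ioc (0 : ℝ) 1, (g p).toReal + γ⁻¹ * ⟪x - p, y - p⟫ ≤
      (g y).toReal + t * (‖y - p‖ ^ 2 / (2 * γ)) := by
    rintro t ⟨ht0, ht1⟩
    have hq := hconv.le_coe (EReal.le_coe_toReal hp) (EReal.le_coe_toReal hy) (a := 1 - t)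
      (b := t) (by linarith) ht0.le (by ring)
    have hmin := (h _).trans (add_le_add hq le_rfl)
    rw [← EReal.coe_toReal hp (hg.2 p)] at hmin
    have hmin' : (g p).toReal + 1 / (2 * γ) * ‖x - p‖ ^ 2 ≤ (1 - t) * (g p).toReal +
        t * (g y).toReal + 1 / (2 * γ) * ‖x - ((1 - t) • p + t • y)‖ ^ 2 := by
      exact_mod_cast hmin
    have hnorm : ‖x - ((1 - t) • p + t • y)‖ ^ 2 =
        ‖x - p‖ ^ 2 - 2 * t * ⟪x - p, y - p⟫ + t ^ 2 * ‖y - p‖ ^ 2 := by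
      rw [show x - ((1 - t) • p + t • y) = (x - p) - t • (y - p) by module, norm_sub_sq_real,
        real_inner_smul_right, norm_smul, Real.norm_of_nonneg ht0.le]
      ring
    rw [hnorm] at hmin'
    refine le_of_mul_le_mul_left ?_ ht0
    linear_combination hmin'
  simpa [real_inner_smul_left] using
    le_of_forall_mem_Ioc_le (by fun_prop : Continuous fun t : ℝ =>
      (g y).toReal + t * (‖y - p‖ ^ 2 / (2 * γ))).continuousWithinAt key

lemma IsProx.inSubdiff_sub_smul (hg : IsProperEF g) (hconv : IsConvexEF g) {γ : ℝ} (hγ : γ ≠ 0)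
    {a u p : H} (h : IsProx g γ (a - γ • u) p) : InSubdiff g p (γ⁻¹ • (a - p) - u) := by
  convert h.inSubdiff hg hconv using 1
  rw [smul_sub, smul_sub, smul_sub, inv_smul_smul₀ hγ]
  abel

lemma inSubdiff_neg_of_minty (hg : IsProperEF g) (hconv : IsConvexEF g) {F : H → H}
    (hF : Continuous F) {ζ : H} (h : ∀ y, g ζ + ⟪F y, ζ - y⟫ ≤ g y) :
    InSubdiff g ζ (-F ζ) := by
  have hζ : g ζ ≠ ⊤ := ne_top_of_forall_add_le hg h
  refine inSubdiff_of_toReal hg.2 hζ fun w hw => ?_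
  have key : ∀ t ∈ Ioc (0 : ℝ) 1,
      (g ζ).toReal ≤ (g w).toReal + ⟪F ((1 - t) • ζ + t • w), w - ζ⟫ := by
    rintro t ⟨ht0, ht1⟩
    set y := (1 - t) • ζ + t • w
    have hy := hconv.le_coe (EReal.le_coe_toReal hζ) (EReal.le_coe_toReal hw) (a := 1 - t)
      (b := t) (by linarith) ht0.le (by ring)
    have hyt : g y ≠ ⊤ := ne_top_of_le_ne_top (EReal.coe_ne_top _) hy
    have hminty := EReal.toReal_add_le_toReal (hg.2 ζ) hζ hyt (h y)
    have hseg := EReal.toReal_le_toReal hy (hg.2 y) (EReal.coe_ne_top _)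
    rw [EReal.toReal_coe] at hseg
    rw [show ζ - y = -(t • (w - ζ)) by module, inner_neg_right, real_inner_smul_right] at hminty
    refine le_of_mul_le_mul_left ?_ ht0
    linear_combination hminty + hseg
  have := le_of_forall_mem_Ioc_le (by fun_prop : Continuous fun t : ℝ =>
    (g w).toReal + ⟪F ((1 - t) • ζ + t • w), w - ζ⟫).continuousWithinAt key
  simp only [sub_zero, one_smul, zero_smul, add_zero] at this
  rw [inner_neg_left]
  linarith

end Hilbert

section Weak

variable {H : Type*} [NormedAddCommGroup H] [InnerProductSpace ℝ H] {ι : Type*}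

def WeakTendsto (x : ι → H) (l : Filter ι) (ζ : H) : Prop :=
  ∀ w : H, Tendsto (fun k => ⟪x k, w⟫) l (𝓝 ⟪ζ, w⟫)

lemma WeakTendsto.of_tendsto_sub {x y : ι → H} {l : Filter ι} {ζ : H} (hx : WeakTendsto x l ζ)
    (h : Tendsto (fun k => y k - x k) l (𝓝 0)) : WeakTendsto y l ζ := fun w => by
  simpa [← inner_add_left] using (hx w).add (h.inner (tendsto_const_nhds (x := w)))

lemma WeakTendsto.tendsto_inner {x e : ι → H} {l : Filter ι} {ζ e₀ : H}
    (hx : WeakTendsto x l ζ) (hbdd : IsBounded (range x)) (he : Tendsto e l (𝓝 e₀)) :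
    Tendsto (fun k => ⟪e k, x k⟫) l (𝓝 ⟪e₀, ζ⟫) := by
  obtain ⟨M, hM⟩ := isBounded_iff_forall_norm_le.1 hbdd
  have hsmall : Tendsto (fun k => ⟪e k - e₀, x k⟫) l (𝓝 0) := by
    refine squeeze_zero_norm (fun k => (norm_inner_le_norm _ _).trans
      (mul_le_mul_of_nonneg_left (hM _ (mem_range_self k)) (norm_nonneg _))) ?_
    simpa using (tendsto_sub_nhds_zero_iff.2 he).norm.mul_const M
  have hweak : Tendsto (fun k => ⟪e₀, x k⟫) l (𝓝 ⟪e₀, ζ⟫) := by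
    simpa only [real_inner_comm e₀] using hx e₀
  simpa [← inner_add_left] using hsmall.add hweak

lemma WeakTendsto.eq_of_tendsto_norm_sub {z : ι → H} {l U V : Filter ι} [U.NeBot] [V.NeBot]
    (hU : U ≤ l) (hV : V ≤ l) {ζ ξ : H} {a b : ℝ}
    (ha : Tendsto (fun k => ‖z k - ζ‖) l (𝓝 a)) (hb : Tendsto (fun k => ‖z k - ξ‖) l (𝓝 b))
    (hζ : WeakTendsto z U ζ) (hξ : WeakTendsto z V ξ) : ζ = ξ := by
  have hpol : ∀ k, ⟪z k, ζ - ξ⟫ = (‖z k - ξ‖ ^ 2 - ‖z k - ζ‖ ^ 2 + ‖ζ‖ ^ 2 - ‖ξ‖ ^ 2) / 2 := by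
    intro k
    rw [norm_sub_sq_real, norm_sub_sq_real, inner_sub_right]
    ring
  have hc : Tendsto (fun k => ⟪z k, ζ - ξ⟫) l
      (𝓝 ((b ^ 2 - a ^ 2 + ‖ζ‖ ^ 2 - ‖ξ‖ ^ 2) / 2)) := by
    simp_rw [hpol]
    exact ((((hb.pow 2).sub (ha.pow 2)).add_const _).sub_const _).div_const 2
  have hζc := tendsto_nhds_unique (hζ (ζ - ξ)) (hc.mono_left hU)
  have hξc := tendsto_nhds_unique (hξ (ζ - ξ)) (hc.mono_left hV)
  rw [← sub_eq_zero, ← inner_self_eq_zero (𝕜 := ℝ), inner_sub_left, hζc, hξc, sub_self]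

lemma exists_weakTendsto_of_forall_tendsto_norm_sub {z : ι → H} {l : Filter ι} [l.NeBot]
    {S : Set H} (hS : ∀ p ∈ S, ∃ ℓ, Tendsto (fun k => ‖z k - p‖) l (𝓝 ℓ))
    (hclust : ∀ V : Ultrafilter ι, ↑V ≤ l → ∃ ζ ∈ S, WeakTendsto z V ζ) :
    ∃ ζ ∈ S, WeakTendsto z l ζ := by
  obtain ⟨ζ, hζS, hζ⟩ := hclust (Ultrafilter.of l) (Ultrafilter.of_le l)
  refine ⟨ζ, hζS, fun w => (tendsto_iff_ultrafilter _ _ _).2 fun V hV => ?_⟩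
  obtain ⟨ξ, hξS, hξ⟩ := hclust V hV
  obtain ⟨a, ha⟩ := hS ζ hζS
  obtain ⟨b, hb⟩ := hS ξ hξS
  rw [hζ.eq_of_tendsto_norm_sub (Ultrafilter.of_le l) hV ha hb hξ]
  exact hξ w

variable [CompleteSpace H]

lemma exists_weakTendsto_of_isBounded {x : ι → H} (hbdd : IsBounded (range x))
    (V : Ultrafilter ι) : ∃ ζ, WeakTendsto x V ζ := by
  obtain ⟨M, hM⟩ := isBounded_iff_forall_norm_le.1 hbdd
  have hinner : ∀ w k, ‖⟪x k, w⟫‖ ≤ M * ‖w‖ := fun w k =>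
    (norm_inner_le_norm _ _).trans (mul_le_mul_of_nonneg_right (hM _ (mem_range_self k))
      (norm_nonneg w))
  have hlim : ∀ w : H, ∃ r : ℝ, Tendsto (fun k => ⟪x k, w⟫) V (𝓝 r) := fun w => by
    obtain ⟨r, -, hr⟩ := (isCompact_closedBall (0 : ℝ) (M * ‖w‖)).ultrafilter_le_nhds
      (V.map fun k => ⟪x k, w⟫)
      (by
        rw [Ultrafilter.coe_map, le_principal_iff, mem_map]
        exact Eventually.of_forall fun k => mem_closedBall_zero_iff.2 (hinner w k))
    exact ⟨r, hr⟩
  choose φ hφ using hlim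
  let φₗ : H →ₗ[ℝ] ℝ :=
    { toFun := φ
      map_add' := fun w₁ w₂ => tendsto_nhds_unique (hφ (w₁ + w₂))
        (by simpa only [inner_add_right] using (hφ w₁).add (hφ w₂))
      map_smul' := fun c w => tendsto_nhds_unique (hφ (c • w))
        (by simpa only [real_inner_smul_right, RingHom.id_apply, smul_eq_mul] using
          (hφ w).const_mul c) }
  have hφ_le : ∀ w, ‖φₗ w‖ ≤ M * ‖w‖ := fun w =>
    le_of_tendsto (hφ w).norm (Eventually.of_forall fun k => hinner w k)
  refine ⟨(InnerProductSpace.toDual ℝ H).symm (φₗ.mkContinuous M hφ_le), fun w => ?_⟩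
  rw [InnerProductSpace.toDual_symm_apply]
  exact hφ w

lemma Convex.mem_of_weakTendsto {C : Set H} (hC : Convex ℝ C) (hCc : IsClosed C)
    {l : Filter ι} [l.NeBot] {x : ι → H} {ζ : H} (hx : WeakTendsto x l ζ)
    (hxC : ∀ᶠ k in l, x k ∈ C) : ζ ∈ C := by
  by_contra hζ
  obtain ⟨f, u, hfu, huζ⟩ := geometric_hahn_banach_closed_point hC hCc hζ
  have hf : Tendsto (fun k => f (x k)) l (𝓝 (f ζ)) := by
    simpa only [real_inner_comm ((InnerProductSpace.toDual ℝ H).symm f),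
      InnerProductSpace.toDual_symm_apply] using hx ((InnerProductSpace.toDual ℝ H).symm f)
  exact (le_of_tendsto hf (hxC.mono fun k hk => (hfu _ hk).le)).not_gt huζ

lemma IsConvexEF.le_of_weakTendsto {g : H → EReal} (hconv : IsConvexEF g)
    (hlsc : LowerSemicontinuous g) {l : Filter ι} [l.NeBot] {x : ι → H} {ζ : H}
    (hx : WeakTendsto x l ζ) {B : ι → ℝ} {t : ℝ} (hB : ∀ k, g (x k) ≤ B k)
    (hBt : Tendsto B l (𝓝 t)) : g ζ ≤ t := by
  by_contra! hlt
  obtain ⟨s, hts, hsζ⟩ := EReal.lt_iff_exists_real_btwn.1 hlt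
  have hmem : ζ ∈ g ⁻¹' Iic (s : EReal) :=
    (hconv.convex_sublevel s).mem_of_weakTendsto (hlsc.isClosed_preimage s) hx
      ((hBt.eventually_lt_const (EReal.coe_lt_coe_iff.1 hts)).mono fun k hk =>
        (hB k).trans (EReal.coe_le_coe_iff.2 hk.le))
  exact hsζ.not_ge hmem

end Weak

section Extragradient

variable {H : Type*} [NormedAddCommGroup H] [InnerProductSpace ℝ H] {g : H → EReal} {F : H → H}

lemma inSubdiff_neg_of_weakTendsto [CompleteSpace H] (hg : IsProperEF g) (hconv : IsConvexEF g)
    (hlsc : LowerSemicontinuous g) (hmono : ∀ x y : H, 0 ≤ ⟪F x - F y, x - y⟫)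
    (hF : Continuous F) {ι : Type*} {l : Filter ι} [l.NeBot] {x e : ι → H} {ζ : H}
    (hbdd : IsBounded (range x)) (hx : WeakTendsto x l ζ) (he : Tendsto e l (𝓝 0))
    (hsub : ∀ k, InSubdiff g (x k) (e k - F (x k))) : InSubdiff g ζ (-F ζ) := by
  refine inSubdiff_neg_of_minty hg hconv hF fun y => ?_
  rcases eq_or_ne (g y) ⊤ with hy | hy
  · simp [hy]
  have hB : ∀ k, g (x k) ≤
      (((g y).toReal + ⟪F y - e k, y⟫ - ⟪F y - e k, x k⟫ : ℝ) : EReal) := by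
    intro k
    have hsubk := (hsub k).toReal_add_inner_le hg hy
    have hmonok := hmono (x k) y
    rw [← EReal.coe_toReal ((hsub k).ne_top hg) (hg.2 _), EReal.coe_le_coe_iff]
    simp only [inner_sub_left, inner_sub_right] at hsubk hmonok ⊢
    linarith [real_inner_comm (F (x k)) y, real_inner_comm (F y) (x k),
      real_inner_comm (F (x k)) (x k), real_inner_comm (F y) y]
  have hlim := ((he.const_sub (F y)).inner (tendsto_const_nhds (x := y))).const_add (g y).toReal
    |>.sub (hx.tendsto_inner hbdd (he.const_sub (F y)))
  rw [sub_zero] at hlim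
  have hle := hconv.le_of_weakTendsto hlsc hx hB hlim
  rw [← EReal.coe_toReal hy (hg.2 y)]
  calc g ζ + ⟪F y, ζ - y⟫
      ≤ (((g y).toReal + ⟪F y, y⟫ - ⟪F y, ζ⟫ : ℝ) : EReal) + ⟪F y, ζ - y⟫ :=
        add_le_add hle le_rfl
    _ = (g y).toReal := by
        rw [← EReal.coe_add, inner_sub_right]
        ring_nf

lemma norm_sub_sq_le_of_inner_add_inner_le {L γ : ℝ} (hL : 0 ≤ L) (hγ : 0 ≤ γ) {a b c s u v : H}
    (huv : ‖u - v‖ ≤ L * ‖a - b‖) (h : ⟪a - b, c - b⟫ + ⟪a - c, s - c⟫ + γ * ⟪u - v, b - c⟫ ≤ 0) :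
    ‖c - s‖ ^ 2 ≤ ‖a - s‖ ^ 2 - (1 - γ * L) * (‖a - b‖ ^ 2 + ‖b - c‖ ^ 2) := by
  have hpol : ∀ x y w : H, 2 * ⟪x - w, y - w⟫ = ‖x - w‖ ^ 2 + ‖y - w‖ ^ 2 - ‖x - y‖ ^ 2 :=
    fun x y w => by
      rw [show x - y = (x - w) - (y - w) by abel, norm_sub_sq_real (x - w) (y - w)]
      ring
  have hpol₁ := hpol a c b
  have hpol₂ := hpol a s c
  rw [norm_sub_rev c b] at hpol₁
  rw [norm_sub_rev s c] at hpol₂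
  have hcs : -(L * ‖a - b‖ * ‖b - c‖) ≤ ⟪u - v, b - c⟫ := by
    have := (abs_real_inner_le_norm (u - v) (b - c)).trans
      (mul_le_mul_of_nonneg_right huv (norm_nonneg _))
    linarith [neg_abs_le ⟪u - v, b - c⟫]
  nlinarith [mul_le_mul_of_nonneg_left hcs hγ, mul_le_mul_of_nonneg_left
    (two_mul_le_add_sq ‖a - b‖ ‖b - c‖) (mul_nonneg hγ hL)]

lemma extragradient_inner_add_inner_le (hg : IsProperEF g) (hconv : IsConvexEF g) {γ : ℝ}
    (hγ : 0 < γ) (hmono : ∀ x y : H, 0 ≤ ⟪F x - F y, x - y⟫) {s a b c : H}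
    (hs : InSubdiff g s (-F s)) (hb : IsProx g γ (a - γ • F a) b)
    (hc : IsProx g γ (a - γ • F b) c) :
    ⟪a - b, c - b⟫ + ⟪a - c, s - c⟫ + γ * ⟪F a - F b, b - c⟫ ≤ 0 := by
  have hcyc := (hb.inSubdiff_sub_smul hg hconv hγ.ne').inner_add_inner_add_inner_nonpos hg
    (hc.inSubdiff_sub_smul hg hconv hγ.ne') hs
  have hsplit : ∀ u v w : H, ⟪γ⁻¹ • u - v, w⟫ = γ⁻¹ * ⟪u, w⟫ - ⟪v, w⟫ := fun u v w => by
    rw [inner_sub_left, real_inner_smul_left]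
  rw [hsplit, hsplit, inner_neg_left] at hcyc
  have hscaled := mul_nonpos_of_nonneg_of_nonpos hγ.le hcyc
  simp only [mul_add, mul_sub, mul_neg, ← mul_assoc, mul_inv_cancel₀ hγ.ne', one_mul] at hscaled
  have hFs : ⟪F s, b - s⟫ ≤ ⟪F b, b - s⟫ := by
    have := hmono b s
    rw [inner_sub_left] at this
    linarith
  have hFa : ⟪F a, b - c⟫ = -⟪F a, c - b⟫ := by rw [← inner_neg_right, neg_sub]
  have hFb : ⟪F b, b - c⟫ = ⟪F b, s - c⟫ + ⟪F b, b - s⟫ := by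
    rw [← inner_add_right, sub_add_sub_comm, add_comm s b, add_sub_add_right_eq_sub]
  rw [inner_sub_left (F a), hFa, hFb]
  linarith [mul_le_mul_of_nonneg_left hFs hγ.le]

lemma extragradient_fejer (hg : IsProperEF g) (hconv : IsConvexEF g) {L γ : ℝ} (hL : 0 ≤ L)
    (hγ : 0 < γ) (hmono : ∀ x y : H, 0 ≤ ⟪F x - F y, x - y⟫)
    (hlip : ∀ x y : H, ‖F x - F y‖ ≤ L * ‖x - y‖) {s a b c : H} (hs : InSubdiff g s (-F s))
    (hb : IsProx g γ (a - γ • F a) b) (hc : IsProx g γ (a - γ • F b) c) :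
    ‖c - s‖ ^ 2 ≤ ‖a - s‖ ^ 2 - (1 - γ * L) * (‖a - b‖ ^ 2 + ‖b - c‖ ^ 2) :=
  norm_sub_sq_le_of_inner_add_inner_le hL hγ.le (hlip a b)
    (extragradient_inner_add_inner_le hg hconv hγ hmono hs hb hc)

end Extragradient

theorem stmt13_general {H : Type*} [NormedAddCommGroup H] [InnerProductSpace ℝ H] [CompleteSpace H]
    (F : H → H) (L γ : ℝ)
    (hmono : ∀ x y : H, 0 ≤ ⟪F x - F y, x - y⟫)
    (hlip : ∀ x y : H, ‖F x - F y‖ ≤ L * ‖x - y‖)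
    (g : H → EReal) (hproper : IsProperEF g) (hconv : IsConvexEF g)
    (hlsc : LowerSemicontinuous g)
    (hγ0 : 0 < γ) (hγ1 : γ < 1 / L)
    (hzer : ∃ zstar : H, InSubdiff g zstar (-F zstar))
    (z zb : ℕ → H)
    (hzb : ∀ k, IsProx g γ (z k - γ • F (z k)) (zb k))
    (hz : ∀ k, IsProx g γ (z k - γ • F (zb k)) (z (k + 1))) :
    ∃ zinf : H, InSubdiff g zinf (-F zinf) ∧
      ∀ y : H, Filter.Tendsto (fun k => ⟪z k, y⟫) Filter.atTop (nhds ⟪zinf, y⟫) := by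
  have hL : 0 < L := one_div_pos.1 (hγ0.trans hγ1)
  have hδ : 0 < 1 - γ * L := by rw [lt_div_iff₀ hL] at hγ1; linarith
  have hF : Continuous F :=
    (LipschitzWith.of_dist_le' fun x y => by simpa [dist_eq_norm] using hlip x y).continuous
  have hfejer : ∀ p, InSubdiff g p (-F p) → ∀ k,
      ‖z (k + 1) - p‖ ^ 2 ≤ ‖z k - p‖ ^ 2 - (1 - γ * L) * ‖z k - zb k‖ ^ 2 := fun p hp k =>
    (extragradient_fejer hproper hconv hL.le hγ0 hmono hlip hp (hzb k) (hz k)).trans <|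
      sub_le_sub_left (mul_le_mul_of_nonneg_left (le_add_of_nonneg_right (sq_nonneg _)) hδ.le) _
  have hanti : ∀ p, InSubdiff g p (-F p) → Antitone fun k => ‖z k - p‖ := fun p hp =>
    antitone_norm_sub_of_sq_succ_le fun k =>
      (hfejer p hp k).trans (sub_le_self _ (mul_nonneg hδ.le (sq_nonneg _)))
  obtain ⟨zs, hzs⟩ := hzer
  have hres := tendsto_sub_of_sq_succ_le_sub_mul hδ (hfejer zs hzs)
  have hbdd : IsBounded (range z) := Metric.isBounded_closedBall.subset <| range_subset_iff.2
    fun k => mem_closedBall_iff_norm.2 (hanti zs hzs (Nat.zero_le k))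
  have he : Tendsto (fun k => γ⁻¹ • (z k - zb k) - (F (z k) - F (zb k))) atTop (𝓝 0) := by
    have hd : Tendsto (fun k => z k - zb k) atTop (𝓝 0) := by simpa using hres.neg
    have hFd : Tendsto (fun k => F (z k) - F (zb k)) atTop (𝓝 0) :=
      squeeze_zero_norm (fun k => hlip _ _) (by simpa using hd.norm.const_mul L)
    simpa using (hd.const_smul γ⁻¹).sub hFd
  refine exists_weakTendsto_of_forall_tendsto_norm_sub (S := {p | InSubdiff g p (-F p)})
    (fun p hp => ⟨_, tendsto_atTop_ciInf (hanti p hp)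
      ⟨0, forall_mem_range.2 fun _ => norm_nonneg _⟩⟩)
    fun V hV => ?_
  obtain ⟨ζ, hζ⟩ := exists_weakTendsto_of_isBounded hbdd V
  refine ⟨ζ, inSubdiff_neg_of_weakTendsto hproper hconv hlsc hmono hF
    (hbdd.range_of_tendsto_sub hres) (hζ.of_tendsto_sub (hres.mono_left hV)) (he.mono_left hV)
    fun k => ?_, hζ⟩
  convert (hzb k).inSubdiff_sub_smul hproper hconv hγ0.ne' using 1
  abel

theorem stmt13 {H : Type*} [NormedAddCommGroup H] [InnerProductSpace ℝ H] [CompleteSpace H]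
    (F : H → H) (L γ : ℝ) (hL : 0 < L)
    (hmono : ∀ x y : H, 0 ≤ ⟪F x - F y, x - y⟫)
    (hlip : ∀ x y : H, ‖F x - F y‖ ≤ L * ‖x - y‖)
    (g : H → EReal) (hproper : IsProperEF g) (hconv : IsConvexEF g)
    (hlsc : LowerSemicontinuous g)
    (hγ0 : 0 < γ) (hγ1 : γ < 1 / L)
    (hzer : ∃ zstar : H, InSubdiff g zstar (-F zstar))
    (z zb : ℕ → H)
    (hzb : ∀ k, IsProx g γ (z k - γ • F (z k)) (zb k))
    (hz : ∀ k, IsProx g γ (z k - γ • F (zb k)) (z (k + 1))) :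
    ∃ zinf : H, InSubdiff g zinf (-F zinf) ∧
      ∀ y : H, Filter.Tendsto (fun k => ⟪z k, y⟫) Filter.atTop (nhds ⟪zinf, y⟫) :=
  stmt13_general F L γ hmono hlip g hproper hconv hlsc hγ0 hγ1 hzer z zb hzb hz
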